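/- Let a, b ∈ ℝ with a ≠ 1/3, let T > 0, μ, z₀ ∈ ℝ, and let q, h, w, z : [0, T] → ℝ be continuously differentiable functions satisfying the (q,h,w,z) system with parameters a, b, with q(0) = μ and z(0) = z₀. Suppose that for every t ∈ [0, T], L_a(q(t)) and L_a(μ) are both strictly positive or both strictly negative, where L_a(r) = 1 − a − (1 − 3a)e^{−2r}. Then for all t ∈ [0, T], z(t) = z₀ · (|L_a(q(t))| / |L_a(μ)|)^{(2−b)/(2(1−3a))}, where the exponentiation is the real power of a positive real number. -/

import Mathlib

open Real Set intervalIntegral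

/-- The `(q,h,w,z)` ODE system with parameters `a`, `b`, holding (in the sense of one-sided
derivatives within `s`) at every point of `s`. -/
def QHWZSystem (a b : ℝ) (s : Set ℝ) (q h w z : ℝ → ℝ) : Prop :=
  ∀ t ∈ s,
    HasDerivWithinAt q (h t * w t * (1 - a - (1 - 3 * a) * Real.exp (-(2 * q t)))) s t ∧
    HasDerivWithinAt h (-(2 - b) * w t * z t * (1 + Real.exp (-q t)) * Real.exp (-q t)) s t ∧
    HasDerivWithinAt w (-(2 - b) * h t * z t * (1 - Real.exp (-q t)) * Real.exp (-q t)) s t ∧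
    HasDerivWithinAt z ((2 - b) * h t * w t * z t * Real.exp (-(2 * q t))) s t

/-- `L_a(r) = 1 - a - (1 - 3a)e^{-2r}`. -/
noncomputable def Lfun (a r : ℝ) : ℝ := 1 - a - (1 - 3 * a) * Real.exp (-(2 * r))

theorem z_formula (a b T μ z₀ : ℝ) (ha : a ≠ 1 / 3) (hT : 0 < T)
    (q h w z : ℝ → ℝ)
    (hsys : QHWZSystem a b (Set.Icc 0 T) q h w z)
    (hq0 : q 0 = μ) (hz0 : z 0 = z₀)
    (hsign : ∀ t ∈ Set.Icc (0 : ℝ) T,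
      (0 < Lfun a (q t) ∧ 0 < Lfun a μ) ∨ (Lfun a (q t) < 0 ∧ Lfun a μ < 0)) :
    ∀ t ∈ Set.Icc (0 : ℝ) T,
      z t = z₀ * (|Lfun a (q t)| / |Lfun a μ|) ^ ((2 - b) / (2 * (1 - 3 * a))) := by
  have ha' : 1 - 3 * a ≠ 0 := by
    intro h0; apply ha; linarith
  set c : ℝ := (2 - b) / (2 * (1 - 3 * a)) with hc
  have hc2 : c * (2 * (1 - 3 * a)) = 2 - b := by
    rw [hc]; exact div_mul_cancel₀ _ (mul_ne_zero two_ne_zero ha')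
  -- get a uniform sign σ
  obtain ⟨σ, hσ1, hσpos⟩ : ∃ σ : ℝ, |σ| = 1 ∧ ∀ t ∈ Set.Icc (0:ℝ) T, 0 < σ * Lfun a (q t) := by
    rcases hsign 0 ⟨le_refl 0, hT.le⟩ with ⟨_, hμ⟩ | ⟨_, hμ⟩
    · refine ⟨1, abs_one, fun t ht => ?_⟩
      rcases hsign t ht with ⟨h1, _⟩ | ⟨_, h2⟩
      · linarith
      · linarith
    · refine ⟨-1, by norm_num, fun t ht => ?_⟩
      rcases hsign t ht with ⟨_, h2⟩ | ⟨h1, _⟩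
      · linarith
      · linarith
  set u : ℝ → ℝ := fun t => σ * Lfun a (q t) with hu_def
  have habs : ∀ t ∈ Set.Icc (0:ℝ) T, |Lfun a (q t)| = u t := by
    intro t ht
    have h1 : |u t| = |Lfun a (q t)| := by
      simp [hu_def, abs_mul, hσ1]
    rw [← h1, abs_of_pos (hσpos t ht)]
  -- derivative of u
  have hu' : ∀ t ∈ Set.Icc (0:ℝ) T,
      HasDerivWithinAt u (2 * (1 - 3 * a) * Real.exp (-(2 * q t)) * h t * w t * u t)
        (Set.Icc 0 T) t := by
    intro t ht
    have hq' := (hsys t ht).1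
    have h1 : HasDerivWithinAt (fun s => -(2 * q s))
        (-(2 * (h t * w t * (1 - a - (1 - 3 * a) * Real.exp (-(2 * q t)))))) (Set.Icc 0 T) t :=
      (hq'.const_mul 2).neg
    have h2 := h1.exp
    have h3 := ((h2.const_mul (1 - 3 * a)).const_sub (1 - a)).const_mul σ
    have : u = fun s => σ * (1 - a - (1 - 3 * a) * Real.exp (-(2 * q s))) := by
      funext s; simp [hu_def, Lfun]
    rw [this]
    refine h3.congr_deriv ?_
    ring
  -- g is constant
  set g : ℝ → ℝ := fun t => z t * u t ^ (-c) with hg_def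
  have hg' : ∀ t ∈ Set.Icc (0:ℝ) T, HasDerivWithinAt g 0 (Set.Icc 0 T) t := by
    intro t ht
    have hz' := (hsys t ht).2.2.2
    have hut := hσpos t ht
    have h1 := (hu' t ht).rpow_const (p := -c) (Or.inl hut.ne')
    have h2 := hz'.mul h1
    refine h2.congr_deriv ?_
    have hpow : u t ^ (-c - 1) * u t = u t ^ (-c) := by
      rw [← Real.rpow_add_one hut.ne' (-c - 1)]
      rw [sub_add_cancel]
    have key : (2 * (1 - 3 * a) * Real.exp (-(2 * q t)) * h t * w t * u t) * (-c) *
        u t ^ (-c - 1) = -((2 - b) * Real.exp (-(2 * q t)) * h t * w t) * u t ^ (-c) := by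
      rw [← hpow, ← hc2]; ring
    rw [key]; ring
  have hcont : ContinuousOn g (Set.Icc 0 T) := fun t ht => (hg' t ht).continuousWithinAt
  have hconst : ∀ t ∈ Set.Icc (0:ℝ) T, g t = g 0 := by
    refine constant_of_has_deriv_right_zero hcont fun x hx => ?_
    exact (hg' x (Ico_subset_Icc_self hx)).mono_of_mem_nhdsWithin (Icc_mem_nhdsGE_of_mem hx)
  -- conclude
  intro t ht
  have h0mem : (0:ℝ) ∈ Set.Icc (0:ℝ) T := ⟨le_refl 0, hT.le⟩
  have hut := hσpos t ht
  have hu0 : 0 < u 0 := hσpos 0 h0mem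
  have heq : z t * u t ^ (-c) = z₀ * u 0 ^ (-c) := by
    have := hconst t ht
    simpa [hg_def, hz0] using this
  have habst : |Lfun a (q t)| = u t := habs t ht
  have habs0 : |Lfun a μ| = u 0 := by
    have := habs 0 h0mem
    rwa [hq0] at this
  rw [habst, habs0, Real.div_rpow hut.le hu0.le]
  have hpt : (0:ℝ) < u t ^ (-c) := Real.rpow_pos_of_pos hut _
  have h1 : u t ^ (-c) * u t ^ c = 1 := by
    rw [← Real.rpow_add hut]; simp
  have h2 : u 0 ^ (-c) * u 0 ^ c = 1 := by
    rw [← Real.rpow_add hu0]; simp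
  have h0c : (0:ℝ) < u 0 ^ c := Real.rpow_pos_of_pos hu0 _
  calc z t = z t * (u t ^ (-c) * u t ^ c) := by rw [h1, mul_one]
    _ = (z t * u t ^ (-c)) * u t ^ c := by ring
    _ = (z₀ * u 0 ^ (-c)) * u t ^ c := by rw [heq]
    _ = z₀ * (u t ^ c / u 0 ^ c) := by rw [Real.rpow_neg hu0.le]; ring
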